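/- (Proposition 1(i).) Suppose the welfare weight is λ = 0, so that the welfare loss is W_loss(b) = E(b) for b ≥ b̲. Then a peak-time parameter b ≥ b̲ minimizes W_loss on [b̲, ∞) if and only if b ≥ b*: when the planner puts all weight on health, exactly the policies under which health-care capacity is never exceeded are optimal. -/

import Mathlib

open Real MeasureTheory Filter

/-- The logistic infection curve with initial value `x₀` and peak-time parameter `b`:
`x_b t = exp (a t) / (exp (a b) + exp (a t))` where `a = log (1/x₀ - 1) / b`. -/
noncomputable def xcurve (x₀ b : ℝ) : ℝ → ℝ := fun t =>
  Real.exp (Real.log (1 / x₀ - 1) / b * t) /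
    (Real.exp (Real.log (1 / x₀ - 1) / b * b) + Real.exp (Real.log (1 / x₀ - 1) / b * t))

/-- The capacity exceedance `E(b) = ∫ₜ max (x_b′(t) - c) 0 dt`. -/
noncomputable def exceed (x₀ c b : ℝ) : ℝ :=
  ∫ t : ℝ, max (deriv (xcurve x₀ b) t - c) 0

/-!
With `a = L / b`, the curve is a rescaled sigmoid, `x_b t = σ (a (t - b))`, so the wave is
`x_b′ t = a σ′ (a (t - b))` with `σ′ = σ (1 - σ) ≤ 1/4`, equality at `0`: it peaks at height
`a / 4 = L / (4 b)` at `t = b`. Hence for `b ≥ b*` the wave never exceeds `c` and `E b = 0`,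
while for `b < b*` the integrand of `E b` is continuous, positive at `b` and vanishes near
`±∞` (as `σ′` does), so `E b > 0`. As `E ≥ 0` and `E` vanishes at the feasible point
`max b̲ b*`, the minimizers of `E` on `[b̲, ∞)` are exactly its zeros.
-/

open Topology

theorem integral_max_sub_pos_of_tendsto_cocompact {X : Type*} [TopologicalSpace X] [T2Space X]
    [MeasurableSpace X] [OpensMeasurableSpace X] (μ : Measure X) [μ.IsOpenPosMeasure]
    [IsFiniteMeasureOnCompacts μ] {f : X → ℝ} {c : ℝ} {x : X} (hf : Continuous f)
    (hf0 : Tendsto f (cocompact X) (𝓝 0)) (hc : 0 < c) (hx : c < f x) :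
    0 < ∫ y, max (f y - c) 0 ∂μ := by
  have hsupp : HasCompactSupport fun y ↦ max (f y - c) 0 := by
    rw [hasCompactSupport_iff_eventuallyEq, coclosedCompact_eq_cocompact]
    filter_upwards [hf0.eventually (gt_mem_nhds hc)] with y hy
    simp [hy.le]
  exact (hf.sub continuous_const).max continuous_const
    |>.integral_pos_of_hasCompactSupport_nonneg_nonzero (x := x) hsupp
      (fun y ↦ le_max_right _ _) (by simp [hx])

namespace Real

theorem deriv_sigmoid_le (x : ℝ) : deriv sigmoid x ≤ 1 / 4 := by
  rw [deriv_sigmoid]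
  nlinarith [sq_nonneg (2 * sigmoid x - 1)]

theorem deriv_sigmoid_zero : deriv sigmoid 0 = 1 / 4 := by
  simp only [deriv_sigmoid, sigmoid_zero]
  norm_num

theorem continuous_deriv_sigmoid : Continuous (deriv sigmoid) := by
  rw [deriv_sigmoid]
  exact continuous_sigmoid.mul (continuous_const.sub continuous_sigmoid)

theorem tendsto_deriv_sigmoid_cocompact : Tendsto (deriv sigmoid) (cocompact ℝ) (𝓝 0) := by
  rw [cocompact_eq_atBot_atTop, deriv_sigmoid, tendsto_sup]
  constructor
  · simpa using tendsto_sigmoid_atBot.mul (tendsto_sigmoid_atBot.const_sub 1)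
  · simpa using tendsto_sigmoid_atTop.mul (tendsto_sigmoid_atTop.const_sub 1)

end Real

theorem xcurve_eq_sigmoid (x₀ b : ℝ) :
    xcurve x₀ b = fun t ↦ sigmoid (Real.log (1 / x₀ - 1) / b * (t - b)) := by
  funext t
  unfold xcurve
  generalize Real.log (1 / x₀ - 1) / b = a
  rw [sigmoid_def, mul_sub, neg_sub, Real.exp_sub]
  field_simp
  ring

theorem deriv_xcurve (x₀ b : ℝ) :
    deriv (xcurve x₀ b) = fun t ↦
      Real.log (1 / x₀ - 1) / b * deriv sigmoid (Real.log (1 / x₀ - 1) / b * (t - b)) := by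
  funext t
  set a := Real.log (1 / x₀ - 1) / b
  have h : HasDerivAt (fun t ↦ a * (t - b)) a t := by
    simpa using ((hasDerivAt_id t).sub_const b).const_mul a
  rw [xcurve_eq_sigmoid, deriv_sigmoid]
  exact ((hasDerivAt_sigmoid _).comp t h).deriv.trans (mul_comm _ _)

theorem exceed_nonneg (x₀ c b : ℝ) : 0 ≤ exceed x₀ c b :=
  integral_nonneg fun _ ↦ le_max_right _ _

theorem exceed_eq_zero_of_le {x₀ c b : ℝ} (hb : 0 < b) (hc : 0 < c)
    (hL : 0 ≤ Real.log (1 / x₀ - 1)) (h : Real.log (1 / x₀ - 1) / (4 * c) ≤ b) :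
    exceed x₀ c b = 0 := by
  rw [exceed, deriv_xcurve]
  set a := Real.log (1 / x₀ - 1) / b
  have hpeak : a / 4 ≤ c := by
    rw [div_le_iff₀ (by positivity)] at h
    rw [div_div, div_le_iff₀ (by positivity)]
    linarith
  have hle (t : ℝ) : a * deriv sigmoid (a * (t - b)) ≤ c := calc
    _ ≤ a * (1 / 4) := mul_le_mul_of_nonneg_left (deriv_sigmoid_le _) (by positivity)
    _ ≤ c := by linarith
  simp [hle]

theorem exceed_pos_of_lt {x₀ c b : ℝ} (hb : 0 < b) (hc : 0 < c)
    (h : b < Real.log (1 / x₀ - 1) / (4 * c)) : 0 < exceed x₀ c b := by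
  rw [exceed, deriv_xcurve]
  set a := Real.log (1 / x₀ - 1) / b
  have hpeak : c < a / 4 := by
    rw [lt_div_iff₀ (by positivity)] at h
    rw [div_div, lt_div_iff₀ (by positivity)]
    linarith
  have ha : a ≠ 0 := by linarith
  have hproper : Tendsto (fun t ↦ a * (t - b)) (cocompact ℝ) (cocompact ℝ) :=
    ((Homeomorph.subRight b).trans (Homeomorph.mulLeft₀ a ha)).isClosedEmbedding.tendsto_cocompact
  refine integral_max_sub_pos_of_tendsto_cocompact volume (x := b)
    ((continuous_deriv_sigmoid.comp (by fun_prop)).const_mul a) ?_ hc ?_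
  · simpa using (tendsto_deriv_sigmoid_cocompact.comp hproper).const_mul a
  · simpa [deriv_sigmoid_zero, div_eq_mul_inv] using hpeak

theorem exceed_eq_zero_iff {x₀ c b : ℝ} (hb : 0 < b) (hc : 0 < c)
    (hL : 0 ≤ Real.log (1 / x₀ - 1)) :
    exceed x₀ c b = 0 ↔ Real.log (1 / x₀ - 1) / (4 * c) ≤ b :=
  ⟨fun h ↦ not_lt.1 fun hlt ↦ (exceed_pos_of_lt hb hc hlt).ne' h, exceed_eq_zero_of_le hb hc hL⟩

theorem prop1_i_health_only_general (x₀ : ℝ) (hx₀ : 0 < x₀) (hx₀' : x₀ < 1 / 2)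
    (L : ℝ) (hL : L = Real.log (1 / x₀ - 1))
    (c : ℝ) (hc : 0 < c) (bstar : ℝ) (hbstar : bstar = L / (4 * c))
    (blow : ℝ) (hblow : 0 < blow)
    (lam : ℝ)
    (g : ℝ → ℝ)
    (W : ℝ → ℝ)
    (hW : ∀ b, blow ≤ b → W b = lam * g b * (1 - x₀) + (1 - lam) * exceed x₀ c b)
    (hlam : lam = 0) :
    ∀ b, blow ≤ b → ((∀ b', blow ≤ b' → W b ≤ W b') ↔ bstar ≤ b) := by
  subst hL hbstar hlam
  have hW (b : ℝ) (hb : blow ≤ b) : W b = exceed x₀ c b := by simp [hW b hb]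
  have hL : 0 ≤ Real.log (1 / x₀ - 1) :=
    (Real.log_pos (by rw [lt_sub_iff_add_lt, lt_div_iff₀ hx₀]; linarith)).le
  have hzero (b : ℝ) (hb : blow ≤ b) := exceed_eq_zero_iff (hblow.trans_le hb) hc hL
  intro b hb
  constructor
  · intro hmin
    have hfeasible : blow ≤ max blow (Real.log (1 / x₀ - 1) / (4 * c)) := le_max_left _ _
    have hmin' := hmin _ hfeasible
    rw [hW b hb, hW _ hfeasible, (hzero _ hfeasible).2 (le_max_right _ _)] at hmin'
    exact (hzero b hb).1 (le_antisymm hmin' (exceed_nonneg _ _ _))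
  · intro hle b' hb'
    rw [hW b hb, hW b' hb', (hzero b hb).2 hle]
    exact exceed_nonneg _ _ _

theorem prop1_i_health_only (x₀ : ℝ) (hx₀ : 0 < x₀) (hx₀' : x₀ < 1 / 2)
    (L : ℝ) (hL : L = Real.log (1 / x₀ - 1))
    (c : ℝ) (hc : 0 < c) (bstar : ℝ) (hbstar : bstar = L / (4 * c))
    (blow : ℝ) (hblow : 0 < blow)
    (lam : ℝ) (hlam0 : 0 ≤ lam) (hlam1 : lam ≤ 1)
    (g : ℝ → ℝ) (hg : ∀ b, blow ≤ b → 1 ≤ g b)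
    (W : ℝ → ℝ)
    (hW : ∀ b, blow ≤ b → W b = lam * g b * (1 - x₀) + (1 - lam) * exceed x₀ c b)
    (hlam : lam = 0) :
    ∀ b, blow ≤ b → ((∀ b', blow ≤ b' → W b ≤ W b') ↔ bstar ≤ b) :=
  prop1_i_health_only_general x₀ hx₀ hx₀' L hL c hc bstar hbstar blow hblow lam g W hW hlam
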